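/- arXiv:1705.05048 — 2 statements merged into one kernel-verified Lean document; each statement's English description precedes it below -/
import Mathlib

section
/- Let f(z) = 1/z + e^z, g(z) = 1/z + e^z/z and α(z) = 1/z, meromorphic on ℂ. Then f and g share α CM in the sense of vanishing (f − α = e^z and g − α = e^z/z have no zeros), but f/α − 1 = z e^z vanishes at z = 0 while g/α − 1 = e^z has no zeros; consequently f/α and g/α do not share the value 1, not even IM. -/
open Complex Topology
open scoped Classical

/-- The order of a meromorphic function at a point (junk value `0` if `f` is
not meromorphic at `z`).  Order `⊤` means `f ≡ 0` near `z`, a positive order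
is the multiplicity of a zero, a negative order is minus the multiplicity of
a pole. -/
noncomputable def morder (f : ℂ → ℂ) (z : ℂ) : WithTop ℤ :=
  if h : MeromorphicAt f z then meromorphicOrderAt f z else 0

/-- `f(z) = α(z)` in the sense of value: at a pole of `α` it means that `f`
also has a pole at `z`; elsewhere it means that the meromorphic function
`f - α` vanishes at `z`. -/
def ValueEqAt (f α : ℂ → ℂ) (z : ℂ) : Prop :=
  (morder α z < 0 ∧ morder f z < 0) ∨ (0 ≤ morder α z ∧ 0 < morder (f - α) z)

/-- `f` and `g` share the function `α` IM in the sense of value on `D`. -/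
def ShareIMValue (f g α : ℂ → ℂ) (D : Set ℂ) : Prop :=
  ∀ z ∈ D, (ValueEqAt f α z ↔ ValueEqAt g α z)

/-- `f` and `g` share the function `α` CM in the sense of value on `D`:
at points where `α` is finite the orders of the zeros of `f - α` and `g - α`
agree, and at poles of `α` the orders of the zeros of `1/f - 1/α` and
`1/g - 1/α` agree. -/
def ShareCMValue (f g α : ℂ → ℂ) (D : Set ℂ) : Prop :=
  ∀ z ∈ D,
    (0 ≤ morder α z → ∀ m : ℕ, 1 ≤ m →
      (morder (f - α) z = (m : ℤ) ↔ morder (g - α) z = (m : ℤ))) ∧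
    (morder α z < 0 → ∀ m : ℕ, 1 ≤ m →
      (morder (f⁻¹ - α⁻¹) z = (m : ℤ) ↔ morder (g⁻¹ - α⁻¹) z = (m : ℤ)))

/-- `f` and `g` share the function `α` IM in the sense of vanishing on `D`:
`f - α` and `g - α` have the same zeros (ignoring multiplicities). -/
def ShareIMVanishing (f g α : ℂ → ℂ) (D : Set ℂ) : Prop :=
  ∀ z ∈ D, (0 < morder (f - α) z ↔ 0 < morder (g - α) z)

/-- `f` and `g` share the function `α` CM in the sense of vanishing on `D`:
`f - α` and `g - α` have the same zeros with the same multiplicities. -/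
def ShareCMVanishing (f g α : ℂ → ℂ) (D : Set ℂ) : Prop :=
  ∀ z ∈ D, ∀ m : ℕ, 1 ≤ m →
    (morder (f - α) z = (m : ℤ) ↔ morder (g - α) z = (m : ℤ))

/-! The functions `f - α = e^z` and `g - α = e^z / z` have no zeros, so `f` and `g` share `α` CM
vacuously.  Dividing by `α` multiplies by `z`: in `f / α - 1 = z e^z` this creates a zero at the
pole `0` of `α`, while in `g / α - 1 = e^z` it only cancels the pole of `g - α`. -/

theorem morder_eq_meromorphicOrderAt (f : ℂ → ℂ) (z : ℂ) :
    morder f z = meromorphicOrderAt f z := by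
  unfold morder
  split_ifs with hf
  · rfl
  · exact (meromorphicOrderAt_of_not_meromorphicAt hf).symm

theorem AnalyticAt.meromorphicOrderAt_eq_zero {𝕜 E : Type*} [NontriviallyNormedField 𝕜]
    [NormedAddCommGroup E] [NormedSpace 𝕜 E] {f : 𝕜 → E} {x : 𝕜}
    (hf : AnalyticAt 𝕜 f x) (hfx : f x ≠ 0) : meromorphicOrderAt f x = 0 := by
  simp [hf.meromorphicOrderAt_eq, hf.analyticOrderAt_eq_zero.mpr hfx]

theorem shareCMVanishing_of_not_pos {f g α : ℂ → ℂ} {D : Set ℂ}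
    (hf : ∀ z ∈ D, ¬ 0 < morder (f - α) z) (hg : ∀ z ∈ D, ¬ 0 < morder (g - α) z) :
    ShareCMVanishing f g α D := by
  intro z hz m hm
  have hm_pos : (0 : WithTop ℤ) < ((m : ℤ) : WithTop ℤ) := by exact_mod_cast hm
  exact iff_of_false (fun h => hf z hz (h ▸ hm_pos)) (fun h => hg z hz (h ▸ hm_pos))

theorem eventually_nhdsNE_ne_zero (z : ℂ) : ∀ᶠ w in 𝓝[≠] z, w ≠ 0 := by
  rcases eq_or_ne z 0 with rfl | hz
  · exact self_mem_nhdsWithin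
  · exact eventually_ne_nhdsWithin hz

theorem eventuallyEq_nhdsNE_of_forall_ne_zero {F G : ℂ → ℂ} (h : ∀ w ≠ 0, F w = G w) (z : ℂ) :
    F =ᶠ[𝓝[≠] z] G :=
  (eventually_nhdsNE_ne_zero z).mono h

theorem meromorphicOrderAt_cexp (z : ℂ) : meromorphicOrderAt exp z = 0 :=
  analyticAt_cexp.meromorphicOrderAt_eq_zero (exp_ne_zero z)

theorem meromorphicOrderAt_cexp_div_id_nonpos (z : ℂ) : meromorphicOrderAt (exp / id) z ≤ 0 := by
  rcases eq_or_ne z 0 with rfl | hz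
  · rw [meromorphicOrderAt_div analyticAt_cexp.meromorphicAt (MeromorphicAt.id 0),
      meromorphicOrderAt_cexp, meromorphicOrderAt_id]
    decide
  · exact ((analyticAt_cexp.div analyticAt_id hz).meromorphicOrderAt_eq_zero
      (div_ne_zero (exp_ne_zero z) hz)).le

theorem meromorphicOrderAt_id_mul_cexp : meromorphicOrderAt (id * exp) 0 = 1 := by
  rw [meromorphicOrderAt_mul (MeromorphicAt.id 0) analyticAt_cexp.meromorphicAt,
    meromorphicOrderAt_cexp, meromorphicOrderAt_id]
  rfl

/-- Example 5: `f = 1/z + e^z` and `g = 1/z + e^z/z` share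
`α = 1/z` CM in the sense of vanishing, but `f/α - 1 = z e^z` vanishes at `0`
while `g/α - 1 = e^z` has no zeros; hence `f/α` and `g/α` do not share the
value `1`, not even IM. -/
theorem example_five (f g α : ℂ → ℂ)
    (hfdef : f = fun z => z⁻¹ + exp z)
    (hgdef : g = fun z => z⁻¹ + exp z / z)
    (hαdef : α = fun z => z⁻¹) :
    (∀ z, ¬ 0 < morder (f - α) z) ∧
    (∀ z, ¬ 0 < morder (g - α) z) ∧
    ShareCMVanishing f g α Set.univ ∧
    (∀ z ≠ (0 : ℂ), f z / α z - 1 = z * exp z) ∧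
    (∀ z ≠ (0 : ℂ), g z / α z - 1 = exp z) ∧
    0 < morder (f / α - 1) 0 ∧
    (∀ z, ¬ 0 < morder (g / α - 1) z) ∧
    ¬ ShareIMVanishing (f / α) (g / α) 1 Set.univ := by
  have hf_sub : f - α = exp := funext fun z => by simp [hfdef, hαdef]
  have hg_sub : g - α = exp / id := funext fun z => by simp [hgdef, hαdef]
  have hf_div (z : ℂ) (hz : z ≠ 0) : f z / α z - 1 = z * exp z := by
    simp only [hfdef, hαdef]
    field_simp
    ring
  have hg_div (z : ℂ) (hz : z ≠ 0) : g z / α z - 1 = exp z := by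
    simp only [hgdef, hαdef]
    field_simp
    ring
  have hf_free (z : ℂ) : ¬ 0 < morder (f - α) z := by
    simp [hf_sub, morder_eq_meromorphicOrderAt, meromorphicOrderAt_cexp]
  have hg_free (z : ℂ) : ¬ 0 < morder (g - α) z := by
    simpa [hg_sub, morder_eq_meromorphicOrderAt] using meromorphicOrderAt_cexp_div_id_nonpos z
  have hF_pos : 0 < morder (f / α - 1) 0 := by
    rw [morder_eq_meromorphicOrderAt, meromorphicOrderAt_congr
      (eventuallyEq_nhdsNE_of_forall_ne_zero (F := f / α - 1) (G := id * exp) hf_div 0),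
      meromorphicOrderAt_id_mul_cexp]
    exact WithTop.coe_pos.mpr one_pos
  have hG_order (z : ℂ) : morder (g / α - 1) z = 0 := by
    rw [morder_eq_meromorphicOrderAt, meromorphicOrderAt_congr
      (eventuallyEq_nhdsNE_of_forall_ne_zero (F := g / α - 1) hg_div z),
      meromorphicOrderAt_cexp]
  refine ⟨hf_free, hg_free, shareCMVanishing_of_not_pos (fun z _ => hf_free z)
    (fun z _ => hg_free z), hf_div, hg_div, hF_pos, fun z => by simp [hG_order], fun h => ?_⟩
  simpa [hG_order] using (h 0 trivial).mp hF_pos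
end

section
/- Let f(z) = 1/z + e^z, g(z) = 1/z + z e^z and α(z) = 1/z, meromorphic on ℂ. Then: (i) on ℂ ∖ {0} the functions f − α = e^z and g − α = z e^z have no zeros, and at z = 0 both f and g have poles, so f and g share α IM in the sense of value; (ii) 1/f − z = −z² e^z/(1 + z e^z) has a zero of order exactly 2 at z = 0 while 1/g − z = −z³ e^z/(1 + z² e^z) has a zero of order exactly 3 at z = 0, so f and g do not share α CM in the sense of value; (iii) g − α = z e^z vanishes at z = 0 while f − α = e^z does not, so f and g do not share α in the sense of vanishing. -/
open Complex Topology
open scoped Classical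

/-! Both functions are members of the family `f_k(z) = 1/z + z^k u(z)` with `u` entire and
zero-free (`f = f_0`, `g = f_1`, `u = exp`). Every `f_k` has a simple pole at `0`, and
`f_k - 1/z = z^k u` vanishes exactly at `0`, to order `k`. At the common pole `0` of `f_k` and
`α`, `1/f_k - z = -z^(k+2) u / (1 + z^(k+1) u)` has a zero of order `k + 2`, which separates
`k = 0` from `k = 1`. -/

lemma morder_eq_of_eventuallyEq {f g : ℂ → ℂ} {z : ℂ} {n : ℤ} (hg : AnalyticAt ℂ g z)
    (hgz : g z ≠ 0) (h : ∀ᶠ w in 𝓝[≠] z, f w = (w - z) ^ n * g w) : morder f z = n := by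
  have hf : MeromorphicAt f z :=
    MeromorphicAt.iff_eventuallyEq_zpow_smul_analyticAt.mpr ⟨n, g, hg, h⟩
  rw [morder, dif_pos hf, meromorphicOrderAt_eq_int_iff hf]
  exact ⟨g, hg, hgz, h⟩

lemma morder_eq_zero_of_analyticAt {f : ℂ → ℂ} {z : ℂ} (hf : AnalyticAt ℂ f z)
    (hfz : f z ≠ 0) : morder f z = (0 : ℤ) :=
  morder_eq_of_eventuallyEq hf hfz (.of_forall fun w => by simp)

lemma valueEqAt_of_neg {f α : ℂ → ℂ} {z : ℂ} (hα : morder α z < 0) (hf : morder f z < 0) :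
    ValueEqAt f α z :=
  .inl ⟨hα, hf⟩

lemma valueEqAt_iff_of_nonneg {f α : ℂ → ℂ} {z : ℂ} (hα : 0 ≤ morder α z) :
    ValueEqAt f α z ↔ 0 < morder (f - α) z := by
  simp [ValueEqAt, hα, not_lt.mpr hα]

lemma not_shareCMValue_of_morder_inv_sub_ne {f g α : ℂ → ℂ} {D : Set ℂ} {z : ℂ} (hz : z ∈ D)
    (hα : morder α z < 0) {m : ℕ} (hm : 1 ≤ m) (hf : morder (f⁻¹ - α⁻¹) z = (m : ℤ))
    (hg : morder (g⁻¹ - α⁻¹) z ≠ (m : ℤ)) : ¬ ShareCMValue f g α D :=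
  fun h => hg (((h z hz).2 hα m hm).1 hf)

lemma morder_inv_zero : morder (fun w : ℂ => w⁻¹) 0 = (-1 : ℤ) :=
  morder_eq_of_eventuallyEq analyticAt_const one_ne_zero (.of_forall fun w => by simp)

lemma morder_inv_of_ne_zero {z : ℂ} (hz : z ≠ 0) : morder (fun w : ℂ => w⁻¹) z = (0 : ℤ) :=
  morder_eq_zero_of_analyticAt (analyticAt_id.inv hz) (inv_ne_zero hz)

lemma inv_add_pow_mul_sub_inv (u : ℂ → ℂ) (k : ℕ) :
    (fun w => w⁻¹ + w ^ k * u w) - (fun w : ℂ => w⁻¹) = fun w => w ^ k * u w := by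
  funext w
  simp

lemma morder_inv_add_pow_mul_sub_inv {u : ℂ → ℂ} (hu : AnalyticAt ℂ u 0) (hu0 : u 0 ≠ 0)
    (k : ℕ) : morder ((fun w => w⁻¹ + w ^ k * u w) - fun w : ℂ => w⁻¹) 0 = (k : ℤ) := by
  rw [inv_add_pow_mul_sub_inv]
  exact morder_eq_of_eventuallyEq hu hu0 (.of_forall fun w => by simp)

lemma morder_inv_add_pow_mul_sub_inv_of_ne_zero {u : ℂ → ℂ} {z : ℂ} (hu : AnalyticAt ℂ u z)
    (huz : u z ≠ 0) (hz : z ≠ 0) (k : ℕ) :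
    morder ((fun w => w⁻¹ + w ^ k * u w) - fun w : ℂ => w⁻¹) z = (0 : ℤ) := by
  rw [inv_add_pow_mul_sub_inv]
  exact morder_eq_zero_of_analyticAt ((analyticAt_id.pow k).mul hu) (by simp [hz, huz])

lemma morder_inv_add_pow_mul {u : ℂ → ℂ} (hu : AnalyticAt ℂ u 0) (k : ℕ) :
    morder (fun w => w⁻¹ + w ^ k * u w) 0 = (-1 : ℤ) := by
  refine morder_eq_of_eventuallyEq (g := fun w => 1 + w ^ (k + 1) * u w)
    (analyticAt_const.add ((analyticAt_id.pow _).mul hu)) (by simp) ?_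
  filter_upwards [self_mem_nhdsWithin] with w (hw : w ≠ 0)
  field_simp
  ring

lemma morder_inv_inv_add_pow_mul_sub_inv_inv {u : ℂ → ℂ} (hu : AnalyticAt ℂ u 0) (hu0 : u 0 ≠ 0)
    (k : ℕ) :
    morder ((fun w => w⁻¹ + w ^ k * u w)⁻¹ - (fun w : ℂ => w⁻¹)⁻¹) 0 = ((k + 2 : ℕ) : ℤ) := by
  have hd : AnalyticAt ℂ (fun w => 1 + w ^ (k + 1) * u w) 0 :=
    analyticAt_const.add ((analyticAt_id.pow _).mul hu)
  refine morder_eq_of_eventuallyEq (g := fun w => -u w / (1 + w ^ (k + 1) * u w))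
    (hu.neg.div hd (by simp)) (by simpa using hu0) ?_
  filter_upwards [self_mem_nhdsWithin,
    nhdsWithin_le_nhds (hd.continuousAt.eventually_ne (y := 0) (by simp))] with w (hw : w ≠ 0) hd0
  have hsum : w⁻¹ + w ^ k * u w = (1 + w ^ (k + 1) * u w) / w := by field_simp; ring
  simp only [Pi.sub_apply, Pi.inv_apply, hsum, inv_div, inv_inv, sub_zero, zpow_natCast]
  field_simp
  ring

lemma shareIMValue_inv_add_pow_mul {u v : ℂ → ℂ} (hu : Differentiable ℂ u) (hu0 : ∀ z, u z ≠ 0)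
    (hv : Differentiable ℂ v) (hv0 : ∀ z, v z ≠ 0) (k l : ℕ) :
    ShareIMValue (fun w => w⁻¹ + w ^ k * u w) (fun w => w⁻¹ + w ^ l * v w) (fun w => w⁻¹)
      Set.univ := by
  intro z _
  rcases eq_or_ne z 0 with rfl | hz
  · have hα : morder (fun w : ℂ => w⁻¹) 0 < 0 := by rw [morder_inv_zero]; decide
    exact iff_of_true
      (valueEqAt_of_neg hα (by rw [morder_inv_add_pow_mul (hu.analyticAt 0)]; decide))
      (valueEqAt_of_neg hα (by rw [morder_inv_add_pow_mul (hv.analyticAt 0)]; decide))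
  · rw [valueEqAt_iff_of_nonneg (morder_inv_of_ne_zero hz).ge,
      valueEqAt_iff_of_nonneg (morder_inv_of_ne_zero hz).ge,
      morder_inv_add_pow_mul_sub_inv_of_ne_zero (hu.analyticAt z) (hu0 z) hz,
      morder_inv_add_pow_mul_sub_inv_of_ne_zero (hv.analyticAt z) (hv0 z) hz]

/-- Example 7: `f = 1/z + e^z` and `g = 1/z + z e^z` share
`α = 1/z` IM in the sense of value (on `ℂ ∖ {0}` the differences `e^z` and
`z e^z` have no zeros, and at `0` both `f` and `g` have poles), but not CM in
the sense of value (`1/f - z` has a zero of order `2` at `0` while `1/g - z`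
has a zero of order `3`), and they do not share `α` in the sense of vanishing
(`g - α = z e^z` vanishes at `0` while `f - α = e^z` does not). -/
theorem example_seven (f g α : ℂ → ℂ)
    (hfdef : f = fun z => z⁻¹ + exp z)
    (hgdef : g = fun z => z⁻¹ + z * exp z)
    (hαdef : α = fun z => z⁻¹) :
    (∀ z, f z - α z = exp z) ∧
    (∀ z, g z - α z = z * exp z) ∧
    (∀ z ≠ (0 : ℂ), ¬ 0 < morder (f - α) z ∧ ¬ 0 < morder (g - α) z) ∧
    morder f 0 < 0 ∧ morder g 0 < 0 ∧
    ShareIMValue f g α Set.univ ∧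
    morder (f⁻¹ - α⁻¹) 0 = (2 : ℤ) ∧
    morder (g⁻¹ - α⁻¹) 0 = (3 : ℤ) ∧
    ¬ ShareCMValue f g α Set.univ ∧
    0 < morder (g - α) 0 ∧
    ¬ 0 < morder (f - α) 0 ∧
    ¬ ShareIMVanishing f g α Set.univ := by
  have hf : f = fun z => z⁻¹ + z ^ 0 * exp z := by simpa using hfdef
  have hg : g = fun z => z⁻¹ + z ^ 1 * exp z := by simpa using hgdef
  have hexp : AnalyticAt ℂ exp 0 := analyticAt_cexp
  have hα_pole : morder α 0 < 0 := by rw [hαdef, morder_inv_zero]; decide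
  have hf_inv : morder (f⁻¹ - α⁻¹) 0 = (2 : ℤ) := by
    rw [hf, hαdef, morder_inv_inv_add_pow_mul_sub_inv_inv hexp (exp_ne_zero 0)]; rfl
  have hg_inv : morder (g⁻¹ - α⁻¹) 0 = (3 : ℤ) := by
    rw [hg, hαdef, morder_inv_inv_add_pow_mul_sub_inv_inv hexp (exp_ne_zero 0)]; rfl
  have hf_zero : ¬ 0 < morder (f - α) 0 := by
    rw [hf, hαdef, morder_inv_add_pow_mul_sub_inv hexp (exp_ne_zero 0)]; decide
  have hg_zero : 0 < morder (g - α) 0 := by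
    rw [hg, hαdef, morder_inv_add_pow_mul_sub_inv hexp (exp_ne_zero 0)]; decide
  refine ⟨fun z => by simp [hf, hαdef], fun z => by simp [hg, hαdef], fun z hz => ?_, ?_, ?_,
    ?_, hf_inv, hg_inv, not_shareCMValue_of_morder_inv_sub_ne (Set.mem_univ 0) hα_pole
      (m := 2) (by norm_num) hf_inv (by rw [hg_inv]; decide),
    hg_zero, hf_zero, fun h => hf_zero ((h 0 trivial).2 hg_zero)⟩
  · have hexp_z : AnalyticAt ℂ exp z := analyticAt_cexp
    rw [hf, hg, hαdef, morder_inv_add_pow_mul_sub_inv_of_ne_zero hexp_z (exp_ne_zero z) hz,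
      morder_inv_add_pow_mul_sub_inv_of_ne_zero hexp_z (exp_ne_zero z) hz]
    decide
  · rw [hf, morder_inv_add_pow_mul hexp]; decide
  · rw [hg, morder_inv_add_pow_mul hexp]; decide
  · rw [hf, hg, hαdef]
    exact shareIMValue_inv_add_pow_mul differentiable_exp exp_ne_zero differentiable_exp
      exp_ne_zero 0 1
end
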